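/- Let W ⊆ ℝ be a nonempty compact interval of diameter at most D, and let a, b : [0,∞) → W be measurable with b(σ + c) ≥ a(σ) − δ for all σ ≥ 0, where c > 0 and δ ≥ 0 are constants. If X ~ Exp(η) with η > 0, then E[b(X)] ≥ E[a(X)] − D(1 − exp(−ηc)) − δ, and hence E[b(X)] ≥ E[a(X)] − ηcD − δ. -/

import Mathlib

/-!
Split `E[b(X)]` at `c`. On `{X ≤ c}`, which has probability `1 - e^{-ηc}`, bound `b` below by
`lo`. On `{X > c}` use memorylessness, `E[b(X); X > c] = e^{-ηc} E[b(X + c)]`, and the hypothesis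
`b(σ + c) ≥ a(σ) - δ`. Since `E[a(X)] ≤ hi ≤ lo + D`, the loss is at most
`(1 - e^{-ηc}) (hi - lo) + δ ≤ D (1 - e^{-ηc}) + δ`, and `1 - e^{-ηc} ≤ ηc`.
-/

open MeasureTheory ProbabilityTheory Real Set

namespace ProbabilityTheory

lemma ae_nonneg_expMeasure (η : ℝ) : ∀ᵐ x ∂expMeasure η, 0 ≤ x := by
  rw [ae_iff]
  simp only [not_le]
  change volume.withDensity (exponentialPDF η) (Iio 0) = 0
  rw [withDensity_apply _ measurableSet_Iio]
  exact lintegral_exponentialPDF_of_nonpos le_rfl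

lemma integral_expMeasure_eq_setIntegral {η : ℝ} (hη : 0 ≤ η) (f : ℝ → ℝ) :
    ∫ x, f x ∂expMeasure η = ∫ x in Ioi 0, η * exp (-(η * x)) * f x := by
  change ∫ x, f x ∂volume.withDensity (fun x ↦ ENNReal.ofReal (exponentialPDFReal η x)) = _
  rw [integral_withDensity_eq_integral_toReal_smul (measurable_exponentialPDFReal η).ennreal_ofReal,
    ← integral_Ici_eq_integral_Ioi, ← integral_indicator measurableSet_Ici]
  · congr 1 with x
    by_cases hx : 0 ≤ x
    · have : 0 ≤ η * exp (-(η * x)) := by positivity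
      simp [exponentialPDFReal, gammaPDFReal, hx, this]
    · simp [exponentialPDFReal, gammaPDFReal, hx]
  · exact ae_of_all _ fun _ ↦ ENNReal.ofReal_lt_top

/-- Memorylessness of the exponential distribution. -/
lemma setIntegral_Ioi_expMeasure {η c : ℝ} (hη : 0 ≤ η) (hc : 0 ≤ c) (f : ℝ → ℝ) :
    ∫ x in Ioi c, f x ∂expMeasure η = exp (-(η * c)) * ∫ x, f (x + c) ∂expMeasure η := by
  rw [← integral_indicator measurableSet_Ioi, integral_expMeasure_eq_setIntegral hη,
    integral_expMeasure_eq_setIntegral hη, ← integral_const_mul]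
  simp_rw [← indicator_mul_right (Ioi c) (fun x ↦ η * exp (-(η * x)))]
  rw [setIntegral_indicator measurableSet_Ioi, Ioi_inter_Ioi, max_eq_right hc,
    ← (measurePreserving_add_right volume c).setIntegral_preimage_emb
      (measurableEmbedding_addRight c), preimage_add_const_Ioi, sub_self]
  congr 1 with x
  rw [show -(η * (x + c)) = -(η * x) + -(η * c) by ring, exp_add]
  ring

lemma integrable_expMeasure_of_mem_Icc {η lo hi : ℝ} (hη : 0 < η) {f : ℝ → ℝ}
    (hf : Measurable f) (hf_mem : ∀ σ ≥ 0, f σ ∈ Icc lo hi) : Integrable f (expMeasure η) :=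
  have := isProbabilityMeasure_expMeasure hη
  .of_mem_Icc lo hi hf.aemeasurable ((ae_nonneg_expMeasure η).mono hf_mem)

lemma integral_expMeasure_ge_of_le_shift {η c lo δ : ℝ} (hη : 0 < η) (hc : 0 ≤ c) {a b : ℝ → ℝ}
    (ha : Integrable a (expMeasure η)) (hb : Integrable b (expMeasure η))
    (hbc : Integrable (fun x ↦ b (x + c)) (expMeasure η))
    (hlo : ∀ σ ≥ 0, lo ≤ b σ) (hshift : ∀ σ ≥ 0, a σ - δ ≤ b (σ + c)) :
    (1 - exp (-(η * c))) * lo + exp (-(η * c)) * ((∫ x, a x ∂expMeasure η) - δ) ≤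
      ∫ x, b x ∂expMeasure η := by
  have := isProbabilityMeasure_expMeasure hη
  have hIic : (expMeasure η).real (Iic c) = 1 - exp (-(η * c)) := by
    rw [← cdf_eq_real, cdf_expMeasure_eq hη, if_pos hc]
  have hsmall : (1 - exp (-(η * c))) * lo ≤ ∫ x in Iic c, b x ∂expMeasure η := by
    rw [← hIic, ← smul_eq_mul, ← setIntegral_const]
    exact integral_mono_ae (integrable_const _) hb.integrableOn
      (ae_restrict_of_ae ((ae_nonneg_expMeasure η).mono hlo))
  have hshifted : (∫ x, a x ∂expMeasure η) - δ ≤ ∫ x, b (x + c) ∂expMeasure η := by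
    have := integral_mono_ae (f := fun x ↦ a x - δ) (ha.sub (integrable_const δ)) hbc
      ((ae_nonneg_expMeasure η).mono hshift)
    rwa [integral_sub ha (integrable_const δ), integral_const, probReal_univ, one_smul] at this
  have hlarge : exp (-(η * c)) * ((∫ x, a x ∂expMeasure η) - δ) ≤
      ∫ x in Ioi c, b x ∂expMeasure η := by
    rw [setIntegral_Ioi_expMeasure hη.le hc]
    gcongr
  rw [← integral_add_compl measurableSet_Iic hb, compl_Iic]
  exact add_le_add hsmall hlarge

end ProbabilityTheory

theorem stmt_9 (lo hi D : ℝ) (hle : lo ≤ hi) (hD : hi - lo ≤ D)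
    (a b : ℝ → ℝ) (ha : Measurable a) (hb : Measurable b)
    (haW : ∀ σ ≥ (0:ℝ), a σ ∈ Set.Icc lo hi) (hbW : ∀ σ ≥ (0:ℝ), b σ ∈ Set.Icc lo hi)
    (c δ : ℝ) (hc : 0 < c) (hδ : 0 ≤ δ)
    (hmono : ∀ σ ≥ (0:ℝ), b (σ + c) ≥ a σ - δ)
    (η : ℝ) (hη : 0 < η) :
    (∫ x, b x ∂(expMeasure η)) ≥ (∫ x, a x ∂(expMeasure η)) - D * (1 - exp (-η * c)) - δ ∧
    (∫ x, b x ∂(expMeasure η)) ≥ (∫ x, a x ∂(expMeasure η)) - η * c * D - δ := by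
  have := isProbabilityMeasure_expMeasure hη
  have hIa : ∫ x, a x ∂expMeasure η ≤ hi := by
    simpa using integral_mono_ae (integrable_expMeasure_of_mem_Icc hη ha haW) (integrable_const hi)
      ((ae_nonneg_expMeasure η).mono fun σ hσ ↦ (haW σ hσ).2)
  have hkey := integral_expMeasure_ge_of_le_shift hη hc.le
    (integrable_expMeasure_of_mem_Icc hη ha haW) (integrable_expMeasure_of_mem_Icc hη hb hbW)
    (integrable_expMeasure_of_mem_Icc hη (hb.comp (measurable_add_const c))
      fun σ hσ ↦ hbW (σ + c) (by linarith))
    (fun σ hσ ↦ (hbW σ hσ).1) hmono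
  have hE : exp (-(η * c)) ≤ 1 := exp_le_one_iff.2 (neg_nonpos.2 (mul_pos hη hc).le)
  have hfirst : (∫ x, b x ∂expMeasure η) ≥
      (∫ x, a x ∂expMeasure η) - D * (1 - exp (-η * c)) - δ := by
    rw [neg_mul]
    nlinarith [mul_le_mul_of_nonneg_left (show (∫ x, a x ∂expMeasure η) - lo ≤ D by linarith)
      (sub_nonneg.2 hE), mul_le_mul_of_nonneg_right hE hδ]
  refine ⟨hfirst, ?_⟩
  have h1mE : 1 - exp (-η * c) ≤ η * c := by
    rw [neg_mul]; linarith [one_sub_le_exp_neg (η * c)]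
  nlinarith [mul_le_mul_of_nonneg_left h1mE (show 0 ≤ D by linarith)]
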